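/- arXiv:2604.13781 — 5 statements merged into one kernel-verified Lean document; each statement's English description precedes it below -/
import Mathlib

section
/- Let H be a complex Hilbert space, let N be a bounded self-adjoint operator on H satisfying exp(2πiN) = 1, and let A be a bounded operator on H. With B := (1/(2π)) ∫₀^{2π} exp(−iθN) ∘ A ∘ exp(iθN) dθ and G := (1/(2π)) ∫₀^{2π} θ · exp(−iθN) ∘ (A − B) ∘ exp(iθN) dθ, the homological equation −i(G∘N − N∘G) + A = B holds. -/
set_option maxHeartbeats 1000000
set_option synthInstance.maxHeartbeats 1000000

open NormedSpace Complex Real MeasureTheory intervalIntegral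

section Aux
variable {𝔸 : Type*} [NormedRing 𝔸] [NormedAlgebra ℂ 𝔸] [CompleteSpace 𝔸]

lemma my_integral_mul_const {a b : ℝ} {f : ℝ → 𝔸} (hf : IntervalIntegrable f volume a b) (c : 𝔸) :
    (∫ θ in a..b, f θ) * c = ∫ θ in a..b, f θ * c := by
  have := ((ContinuousLinearMap.mul ℂ 𝔸).flip c).intervalIntegral_comp_comm hf
  simpa using this.symm

lemma my_integral_const_mul {a b : ℝ} {f : ℝ → 𝔸} (hf : IntervalIntegrable f volume a b) (c : 𝔸) :
    c * (∫ θ in a..b, f θ) = ∫ θ in a..b, c * f θ := by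
  have := (ContinuousLinearMap.mul ℂ 𝔸 c).intervalIntegral_comp_comm hf
  simpa using this.symm
end Aux

/-- With `B := (1/(2π)) ∫₀^{2π} exp(-iθN) A exp(iθN) dθ` and
`G := (1/(2π)) ∫₀^{2π} θ exp(-iθN) (A - B) exp(iθN) dθ`, the homological equation
`-i[G,N] + A = B` holds. -/
theorem homological_equation
    {H : Type*} [NormedAddCommGroup H] [InnerProductSpace ℂ H] [CompleteSpace H]
    (N A : H →L[ℂ] H) (hN : IsSelfAdjoint N)
    (hper : NormedSpace.exp (((2 * (π : ℂ)) * Complex.I) • N) = 1)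
    (B G : H →L[ℂ] H)
    (hB : B = (2 * π)⁻¹ •
      ∫ θ in (0:ℝ)..(2 * π),
        NormedSpace.exp ((-(θ : ℂ) * Complex.I) • N) * A * NormedSpace.exp (((θ : ℂ) * Complex.I) • N))
    (hG : G = (2 * π)⁻¹ •
      ∫ θ in (0:ℝ)..(2 * π),
        (θ : ℂ) • (NormedSpace.exp ((-(θ : ℂ) * Complex.I) • N) * (A - B) *
          NormedSpace.exp (((θ : ℂ) * Complex.I) • N))) :
    (-Complex.I) • (G * N - N * G) + A = B := by
  let +nondep : NormedAlgebra ℚ (H →L[ℂ] H) := .restrictScalars ℚ ℂ _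
  have hπ : (0:ℝ) < 2 * π := by positivity
  set M : H →L[ℂ] H := Complex.I • N with hM
  set e : ℝ → (H →L[ℂ] H) := fun θ => NormedSpace.exp (θ • M) with he
  have hrw1 : ∀ θ : ℝ, NormedSpace.exp (((θ:ℂ) * Complex.I) • N) = e θ := by
    intro θ
    rw [he]
    congr 1
    rw [mul_smul]
    exact Complex.coe_smul θ M
  have hrw2 : ∀ θ : ℝ, NormedSpace.exp ((-(θ:ℂ) * Complex.I) • N) = e (-θ) := by
    intro θ
    rw [show -(θ:ℂ) = ((-θ : ℝ) : ℂ) by push_cast; ring]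
    exact hrw1 (-θ)
  simp only [hrw1, hrw2] at hB hG
  have he_add : ∀ s t : ℝ, e (s + t) = e s * e t := by
    intro s t
    rw [he]
    simp only
    rw [add_smul]
    exact exp_add_of_commute (((Commute.refl M).smul_left s).smul_right t)
  have he0 : e 0 = 1 := by
    rw [he]; simp only [zero_smul]; exact NormedSpace.exp_zero
  have hecont : Continuous e := exp_continuous.comp (continuous_id.smul continuous_const)
  have hencont : Continuous (fun θ : ℝ => e (-θ)) := hecont.comp continuous_neg
  have he2π : e (2 * π) = 1 := by
    rw [← hrw1 (2*π), ← hper]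
    congr 3
    push_cast
    ring
  have hne2π : e (-(2 * π)) = 1 := by
    have h := he_add (-(2*π)) (2*π)
    rw [neg_add_cancel, he0, he2π, mul_one] at h
    exact h.symm
  have hcomm : ∀ θ : ℝ, Commute M (e θ) := fun θ =>
    ((Commute.refl M).smul_right θ).exp_right
  set g : ℝ → (H →L[ℂ] H) := fun θ => e (-θ) * A * e θ with hg
  set v : ℝ → (H →L[ℂ] H) := fun θ => e (-θ) * (A - B) * e θ with hv
  have hgcont : Continuous g := (hencont.mul continuous_const).mul hecont
  have hvcont : Continuous v := (hencont.mul continuous_const).mul hecont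
  have hgint : IntervalIntegrable g volume 0 (2*π) := hgcont.intervalIntegrable _ _
  -- invariance of B under conjugation
  have hBinv : ∀ s : ℝ, e (-s) * B * e s = B := by
    intro s
    have step1 : e (-s) * B * e s
        = (2*π)⁻¹ • (e (-s) * (∫ θ in (0:ℝ)..2*π, g θ) * e s) := by
      rw [hB, mul_smul_comm, smul_mul_assoc]
    have step2 : e (-s) * (∫ θ in (0:ℝ)..2*π, g θ) * e s
        = ∫ θ in (0:ℝ)..2*π, g (θ + s) := by
      rw [my_integral_const_mul hgint (e (-s)),
        my_integral_mul_const (f := fun θ => e (-s) * g θ) ((continuous_const.mul hgcont).intervalIntegrable _ _) (e s)]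
      apply intervalIntegral.integral_congr
      intro θ _
      show e (-s) * (e (-θ) * A * e θ) * e s = e (-(θ+s)) * A * e (θ+s)
      rw [he_add θ s, show -(θ+s) = -s + -θ by ring, he_add]
      simp only [mul_assoc]
    have hperg : Function.Periodic g (2*π) := by
      intro θ
      show e (-(θ + 2*π)) * A * e (θ + 2*π) = e (-θ) * A * e θ
      rw [he_add θ (2*π), he2π, mul_one, show -(θ+2*π) = -θ + -(2*π) by ring,
        he_add, hne2π, mul_one]
    have step3 : ∫ θ in (0:ℝ)..2*π, g (θ + s) = ∫ θ in (0:ℝ)..2*π, g θ := by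
      rw [intervalIntegral.integral_comp_add_right g s, zero_add, add_comm (2*π) s]
      simpa using hperg.intervalIntegral_add_eq s 0
    rw [step1, step2, step3, ← hB]
  have hvB : ∀ θ : ℝ, v θ = g θ - B := by
    intro θ
    have h1 : v θ = g θ - e (-θ) * B * e θ := by
      show e (-θ) * (A - B) * e θ = e (-θ) * A * e θ - e (-θ) * B * e θ
      noncomm_ring
    rw [h1, hBinv θ]
  have hgint2 : ∫ θ in (0:ℝ)..2*π, g θ = (2*π) • B := by
    rw [hB, smul_smul, mul_inv_cancel₀ (ne_of_gt hπ), one_smul]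
  have hvint0 : ∫ θ in (0:ℝ)..2*π, v θ = 0 := by
    rw [intervalIntegral.integral_congr (g := fun θ => g θ - B) (fun θ _ => hvB θ),
      intervalIntegral.integral_sub hgint (intervalIntegrable_const), hgint2,
      intervalIntegral.integral_const]
    simp
  -- derivative of v
  have hde : ∀ θ : ℝ, HasDerivAt e (e θ * M) θ := fun θ => hasDerivAt_exp_smul_const M θ
  have hden : ∀ θ : ℝ, HasDerivAt (fun t => e (-t)) (-(M * e (-θ))) θ := by
    intro θ
    have h1 : ∀ t : ℝ, e (-t) = NormedSpace.exp (t • (-M)) := by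
      intro t; rw [he]; simp only [smul_neg, neg_smul]
    have h2 := hasDerivAt_exp_smul_const (-M) θ
    simp only [← h1] at h2
    have h3 : e (-θ) * -M = -(M * e (-θ)) := by rw [mul_neg, ← (hcomm (-θ)).eq]
    rw [← h3]
    exact h2
  set w : ℝ → (H →L[ℂ] H) := fun θ => -(M * v θ) + v θ * M with hw
  have hdv : ∀ θ : ℝ, HasDerivAt v (w θ) θ := by
    intro θ
    have h := ((hden θ).mul_const (A - B)).mul (hde θ)
    have hw' : w θ = -(M * e (-θ)) * (A - B) * e θ + e (-θ) * (A - B) * (e θ * M) := by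
      simp only [w, v, neg_mul, mul_assoc]
    rw [hw']
    exact h
  have hwcont : Continuous w := ((continuous_const.mul hvcont).neg).add (hvcont.mul continuous_const)
  -- integration by parts
  set u : ℝ → (H →L[ℂ] H) := fun θ => (θ:ℂ) • 1 with hu
  have hdu : ∀ θ : ℝ, HasDerivAt u 1 θ := by
    intro θ
    simp only [hu, Complex.coe_smul]
    simpa using (hasDerivAt_id θ).smul_const (1 : H →L[ℂ] H)
  have hparts : ∫ θ in (0:ℝ)..2*π, u θ * w θ = (2*π : ℝ) • (A - B) := by
    rw [intervalIntegral.integral_mul_deriv_eq_deriv_mul (u' := fun _ => 1) (v' := w)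
      (fun x _ => hdu x) (fun x _ => hdv x)
      intervalIntegrable_const (hwcont.intervalIntegrable _ _)]
    rw [intervalIntegral.integral_congr (g := v) (fun θ _ => one_mul _), hvint0]
    show u (2*π) * v (2*π) - u 0 * v 0 - 0 = _
    have hv2π : v (2*π) = A - B := by
      show e (-(2*π)) * (A - B) * e (2*π) = A - B
      rw [he2π, hne2π, one_mul, mul_one]
    rw [hv2π]
    simp [hu, smul_mul_assoc, Complex.coe_smul]
  -- main computation
  have huvcont : Continuous fun θ : ℝ => (θ:ℂ) • v θ := Complex.continuous_ofReal.smul hvcont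
  have huvint : IntervalIntegrable (fun θ : ℝ => (θ:ℂ) • v θ) volume 0 (2*π) :=
    huvcont.intervalIntegrable _ _
  have hGN : G * N - N * G
      = (2*π)⁻¹ • ∫ θ in (0:ℝ)..2*π, (((θ:ℂ) • v θ) * N - N * ((θ:ℂ) • v θ)) := by
    rw [hG, smul_mul_assoc, mul_smul_comm, ← smul_sub]
    congr 1
    rw [my_integral_mul_const huvint N, my_integral_const_mul huvint N,
      ← intervalIntegral.integral_sub (f := fun θ => (θ:ℂ) • v θ * N) (g := fun θ => N * ((θ:ℂ) • v θ)) ((huvcont.mul continuous_const).intervalIntegrable _ _)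
        ((continuous_const.mul huvcont).intervalIntegrable _ _)]
  have key : (-Complex.I) • (G * N - N * G) = -(A - B) := by
    rw [hGN, smul_comm, ← intervalIntegral.integral_smul]
    rw [intervalIntegral.integral_congr (g := fun θ => -(u θ * w θ)) ?_]
    · rw [intervalIntegral.integral_neg, hparts, smul_neg, smul_smul,
        inv_mul_cancel₀ (ne_of_gt hπ), one_smul]
    · intro θ _
      simp only [hu, hw, hM, smul_mul_assoc, mul_smul_comm, one_mul]
      module
  rw [key]
  abel
end

section
/- Let H be a complex Hilbert space and let N be a bounded self-adjoint operator on H satisfying exp(2πiN) = 1. Then for every bounded self-adjoint operator A on H there exist bounded self-adjoint operators B and G on H such that B∘N = N∘B, −i(G∘N − N∘G) + A = B, ‖B‖ ≤ ‖A‖, and ‖G‖ ≤ 2π‖A‖. -/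
open NormedSpace Complex Real

set_option maxHeartbeats 2000000 in
set_option synthInstance.maxHeartbeats 1000000 in
/-- For bounded self-adjoint `N` with `exp(2πiN) = 1` and any bounded self-adjoint `A`,
there exist bounded self-adjoint `B`, `G` with `[B,N] = 0`, `-i[G,N] + A = B`,
`‖B‖ ≤ ‖A‖` and `‖G‖ ≤ 2π‖A‖`. -/
theorem exists_homological_solution
    {H : Type*} [NormedAddCommGroup H] [InnerProductSpace ℂ H] [CompleteSpace H]
    (N : H →L[ℂ] H) (hN : IsSelfAdjoint N)
    (hper : NormedSpace.exp (((2 * (π : ℂ)) * Complex.I) • N) = 1)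
    (A : H →L[ℂ] H) (hA : IsSelfAdjoint A) :
    ∃ B G : H →L[ℂ] H, IsSelfAdjoint B ∧ IsSelfAdjoint G ∧
      B * N = N * B ∧
      (-Complex.I) • (G * N - N * G) + A = B ∧
      ‖B‖ ≤ ‖A‖ ∧ ‖G‖ ≤ 2 * π * ‖A‖ := by
  rcases subsingleton_or_nontrivial H with hs | hnt
  · refine ⟨0, 0, ?_, ?_, ?_, ?_, ?_, ?_⟩
    · exact .zero _
    · exact .zero _
    · exact Subsingleton.elim _ _
    · exact Subsingleton.elim _ _
    · simp
    · simp
  have hπ : (0:ℝ) < 2 * π := by positivity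
  set T : H →L[ℂ] H := Complex.I • N with hT
  set e : ℝ → H →L[ℂ] H := fun t => NormedSpace.exp (t • T) with he
  have hder : ∀ t : ℝ, HasDerivAt e (e t * T) t := fun t => hasDerivAt_exp_smul_const T t
  have hcomm : ∀ t : ℝ, e t * T = T * e t := fun t =>
    (hasDerivAt_exp_smul_const T t).unique (hasDerivAt_exp_smul_const' T t)
  have hecont : Continuous e := by
    rw [continuous_iff_continuousAt]; exact fun t => (hder t).continuousAt
  have hadd : ∀ s t : ℝ, e (s + t) = e s * e t := by
    intro s t
    have hc : Commute (s • T) (t • T) := ((Commute.refl T).smul_left s).smul_right t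
    show NormedSpace.exp ((s + t) • T) = _
    rw [add_smul]
    exact (letI : NormedAlgebra ℚ (H →L[ℂ] H) := NormedAlgebra.restrictScalars ℚ ℂ _; exp_add_of_commute hc)
  have he0 : e 0 = 1 := by
    show NormedSpace.exp ((0:ℝ) • T) = 1
    rw [zero_smul, NormedSpace.exp_zero]
  have heinv : ∀ t : ℝ, e t * e (-t) = 1 := fun t => by
    rw [← hadd, add_neg_cancel, he0]
  have heinv' : ∀ t : ℝ, e (-t) * e t = 1 := fun t => by
    rw [← hadd, neg_add_cancel, he0]
  have hstar : ∀ t : ℝ, star (e t) = e (-t) := by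
    intro t
    have hsT : star T = -T := by
      rw [hT, star_smul, hN.star_eq]
      simp
    show star (NormedSpace.exp (t • T)) = NormedSpace.exp ((-t) • T)
    rw [star_exp]
    congr 1
    rw [star_smul, star_trivial, hsT, smul_neg, neg_smul]
  have hnorm : ∀ t : ℝ, ‖e t‖ = 1 := by
    intro t
    have hmem : e t ∈ unitary (H →L[ℂ] H) := by
      rw [Unitary.mem_iff]
      exact ⟨by rw [hstar t]; exact heinv' t, by rw [hstar t]; exact heinv t⟩
    exact CStarRing.norm_of_mem_unitary hmem
  set F : ℝ → H →L[ℂ] H := fun t => e t * A * e (-t) with hF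
  have hFcont : Continuous F :=
    (hecont.mul continuous_const).mul (hecont.comp continuous_neg)
  have hFnorm : ∀ t : ℝ, ‖F t‖ ≤ ‖A‖ := by
    intro t
    calc ‖e t * A * e (-t)‖ ≤ ‖e t * A‖ * ‖e (-t)‖ := norm_mul_le _ _
      _ ≤ ‖e t‖ * ‖A‖ * ‖e (-t)‖ := by gcongr; exact norm_mul_le _ _
      _ = ‖A‖ := by rw [hnorm, hnorm]; ring
  have hFsa : ∀ t : ℝ, star (F t) = F t := by
    intro t
    show star (e t * A * e (-t)) = e t * A * e (-t)
    rw [star_mul, star_mul, hstar, hstar, hA.star_eq, neg_neg, mul_assoc]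
  have hFderiv : ∀ t : ℝ, HasDerivAt F (T * F t - F t * T) t := by
    intro t
    have h1 : HasDerivAt (fun u : ℝ => e u * A) (e t * T * A) t := (hder t).mul_const A
    have h2 : HasDerivAt (fun u : ℝ => e (-u)) ((-1 : ℝ) • (e (-t) * T)) t :=
      (hder (-t)).scomp t (hasDerivAt_neg t)
    have h3 := h1.mul h2
    have key : e t * T * A * e (-t) + (e t * A) * ((-1:ℝ) • (e (-t) * T))
        = T * F t - F t * T := by
      rw [hcomm t, neg_one_smul, mul_neg, ← sub_eq_add_neg]
      show _ = T * (e t * A * e (-t)) - (e t * A * e (-t)) * T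
      simp only [mul_assoc]
    rw [key] at h3
    exact h3
  have hT2π : ((2 * π : ℝ)) • T = ((2 * (π:ℂ)) * Complex.I) • N := by
    rw [hT, ← coe_smul, smul_smul]
    norm_num
  have heper : e (2 * π) = 1 := by
    show NormedSpace.exp ((2 * π : ℝ) • T) = 1
    rw [hT2π]
    exact hper
  have heper' : e (-(2 * π)) = 1 := by
    have h := heinv' (2 * π)
    rwa [heper, mul_one] at h
  have hF2π : F (2 * π) = A := by
    show e (2 * π) * A * e (-(2 * π)) = A
    rw [heper, heper', one_mul, mul_one]
  have hF0 : F 0 = A := by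
    show e 0 * A * e (-0) = A
    rw [neg_zero, he0, one_mul, mul_one]
  have hFint : IntervalIntegrable F MeasureTheory.volume 0 (2 * π) :=
    hFcont.intervalIntegrable _ _
  have hDcont : Continuous (fun t => T * F t - F t * T) :=
    (continuous_const.mul hFcont).sub (hFcont.mul continuous_const)
  have hFint' : IntervalIntegrable (fun t => T * F t - F t * T)
      MeasureTheory.volume 0 (2 * π) := hDcont.intervalIntegrable _ _
  set J := ∫ t in (0:ℝ)..(2*π), F t with hJ
  set K := ∫ t in (0:ℝ)..(2*π), t • F t with hK
  have hKint : IntervalIntegrable (fun t : ℝ => t • F t) MeasureTheory.volume 0 (2*π) :=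
    (continuous_id.smul hFcont).intervalIntegrable _ _
  -- FTC 1
  have hFTC1 : ∫ t in (0:ℝ)..(2*π), (T * F t - F t * T) = 0 := by
    rw [intervalIntegral.integral_eq_sub_of_hasDerivAt (fun t _ => hFderiv t) hFint',
      hF2π, hF0, sub_self]
  have hTJ : T * J = J * T := by
    have hl := (ContinuousLinearMap.mul ℂ (H →L[ℂ] H) T).intervalIntegral_comp_comm hFint
    have hr := ((ContinuousLinearMap.mul ℂ (H →L[ℂ] H)).flip T).intervalIntegral_comp_comm hFint
    simp only [ContinuousLinearMap.mul_apply', ContinuousLinearMap.flip_apply] at hl hr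
    have h0 : T * J - J * T = 0 := by
      rw [hJ, ← hl, ← hr,
        ← intervalIntegral.integral_sub (f := fun t => T * F t) (g := fun t => F t * T) ((continuous_const.mul hFcont).intervalIntegrable _ _)
          ((hFcont.mul continuous_const).intervalIntegrable _ _)]
      exact hFTC1
    have := sub_eq_zero.mp h0
    exact this
  -- FTC 2 (integration by parts)
  have hgderiv : ∀ t : ℝ, HasDerivAt (fun u : ℝ => u • F u)
      (t • (T * F t - F t * T) + (1:ℝ) • F t) t := fun t =>
    (hasDerivAt_id t).smul (hFderiv t)
  have hKint' : IntervalIntegrable (fun t : ℝ => t • (T * F t - F t * T) + (1:ℝ) • F t)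
      MeasureTheory.volume 0 (2*π) :=
    (by fun_prop : Continuous (fun t : ℝ => t • (T * F t - F t * T) + (1:ℝ) • F t)).intervalIntegrable _ _
  have hFTC2 : ∫ t in (0:ℝ)..(2*π), (t • (T * F t - F t * T) + (1:ℝ) • F t)
      = (2*π) • A := by
    rw [intervalIntegral.integral_eq_sub_of_hasDerivAt (fun t _ => hgderiv t) hKint', hF2π]
    simp
  have hsplit : ∫ t in (0:ℝ)..(2*π), (t • (T * F t - F t * T) + (1:ℝ) • F t)
      = (T * K - K * T) + J := by
    have hc1 : Continuous (fun t : ℝ => t • (T * F t - F t * T)) := continuous_id.smul hDcont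
    have hc2 : Continuous (fun t : ℝ => (1:ℝ) • F t) := by fun_prop
    rw [intervalIntegral.integral_add (hc1.intervalIntegrable _ _) (hc2.intervalIntegrable _ _)]
    congr 1
    · have h1 : ∀ t : ℝ, t • (T * F t - F t * T) = T * (t • F t) - (t • F t) * T := by
        intro t; rw [smul_sub, ← mul_smul_comm t T (F t), ← smul_mul_assoc t (F t) T]
      rw [intervalIntegral.integral_congr (g := fun t : ℝ => T * (t • F t) - (t • F t) * T)
        (fun t _ => h1 t)]
      have hc3 : Continuous (fun t : ℝ => T * (t • F t)) :=
        continuous_const.mul (continuous_id.smul hFcont)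
      have hc4 : Continuous (fun t : ℝ => (t • F t) * T) :=
        (continuous_id.smul hFcont).mul continuous_const
      rw [intervalIntegral.integral_sub (hc3.intervalIntegrable _ _) (hc4.intervalIntegrable _ _)]
      have hl := (ContinuousLinearMap.mul ℂ (H →L[ℂ] H) T).intervalIntegral_comp_comm hKint
      have hr := ((ContinuousLinearMap.mul ℂ (H →L[ℂ] H)).flip T).intervalIntegral_comp_comm hKint
      simp only [ContinuousLinearMap.mul_apply', ContinuousLinearMap.flip_apply] at hl hr
      rw [hl, hr, hK]
    · simp [hJ]
  have hTK : T * K - K * T = (2*π) • A - J := by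
    have h := hFTC2
    rw [hsplit] at h
    exact eq_sub_of_add_eq h
  -- self-adjointness of the integrals
  have hstarL := (starL' ℝ : (H →L[ℂ] H) ≃L[ℝ] (H →L[ℂ] H))
  have hstarJ : star J = J := by
    have hsl := ((starL' ℝ : (H →L[ℂ] H) ≃L[ℝ] (H →L[ℂ] H)).toContinuousLinearMap).intervalIntegral_comp_comm hFint
    simp only [ContinuousLinearEquiv.coe_coe, starL'_apply] at hsl
    calc star J = ∫ t in (0:ℝ)..(2*π), star (F t) := hsl.symm
      _ = ∫ t in (0:ℝ)..(2*π), F t := intervalIntegral.integral_congr fun t _ => hFsa t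
      _ = J := hJ.symm
  have hstarK : star K = K := by
    have hsl := ((starL' ℝ : (H →L[ℂ] H) ≃L[ℝ] (H →L[ℂ] H)).toContinuousLinearMap).intervalIntegral_comp_comm hKint
    simp only [ContinuousLinearEquiv.coe_coe, starL'_apply] at hsl
    calc star K = ∫ t in (0:ℝ)..(2*π), star (t • F t) := hsl.symm
      _ = ∫ t in (0:ℝ)..(2*π), t • F t := by
          refine intervalIntegral.integral_congr fun t _ => ?_
          rw [star_smul, star_trivial, hFsa t]
      _ = K := hK.symm
  have hNJ : N * J = J * N := by
    have h : Complex.I • (N * J) = Complex.I • (J * N) := by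
      have := hTJ
      rw [hT] at this
      simpa [smul_mul_assoc, mul_smul_comm] using this
    have h2 := congrArg (fun X => (-Complex.I) • X) h
    simpa [smul_smul] using h2
  refine ⟨(2*π)⁻¹ • J, (-(2*π)⁻¹ : ℝ) • K, ?_, ?_, ?_, ?_, ?_, ?_⟩
  · show star _ = _
    rw [star_smul, star_trivial, hstarJ]
  · show star _ = _
    rw [star_smul, star_trivial, hstarK]
  · rw [smul_mul_assoc, mul_smul_comm, hNJ]
  · -- the homological identity
    have hIK : (-Complex.I) • (K * N - N * K) = (2*π:ℝ) • A - J := by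
      have h := hTK
      rw [hT] at h
      rw [← h]
      simp only [smul_sub, smul_mul_assoc, mul_smul_comm, neg_smul]
      abel
    have hGNG : ((-(2*π)⁻¹ : ℝ) • K) * N - N * ((-(2*π)⁻¹ : ℝ) • K)
        = (-(2*π)⁻¹ : ℝ) • (K * N - N * K) := by
      rw [smul_mul_assoc, mul_smul_comm, smul_sub]
    have hne : (2*π:ℝ) ≠ 0 := ne_of_gt hπ
    rw [hGNG, smul_comm, hIK]
    match_scalars <;> field_simp <;> ring
  · rw [norm_smul]
    have h1 : ‖J‖ ≤ ‖A‖ * |2*π - 0| :=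
      intervalIntegral.norm_integral_le_of_norm_le_const fun t _ => hFnorm t
    rw [sub_zero, abs_of_pos hπ] at h1
    have h2 : ‖((2*π)⁻¹:ℝ)‖ = (2*π)⁻¹ := by
      rw [Real.norm_eq_abs, abs_of_pos (by positivity)]
    rw [h2]
    calc (2*π)⁻¹ * ‖J‖ ≤ (2*π)⁻¹ * (‖A‖ * (2*π)) := by
          gcongr
      _ = ‖A‖ := by field_simp
  · rw [norm_smul]
    have hbound : ∀ t ∈ Set.uIoc (0:ℝ) (2*π), ‖t • F t‖ ≤ (2*π) * ‖A‖ := by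
      intro t ht
      rw [Set.uIoc_of_le (le_of_lt hπ)] at ht
      rw [norm_smul, Real.norm_eq_abs, abs_of_pos ht.1]
      exact mul_le_mul ht.2 (hFnorm t) (norm_nonneg _) (le_of_lt hπ)
    have h1 : ‖K‖ ≤ (2*π) * ‖A‖ * |2*π - 0| :=
      intervalIntegral.norm_integral_le_of_norm_le_const hbound
    rw [sub_zero, abs_of_pos hπ] at h1
    have h2 : ‖(-(2*π)⁻¹:ℝ)‖ = (2*π)⁻¹ := by
      rw [Real.norm_eq_abs, abs_neg, abs_of_pos (by positivity)]
    rw [h2]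
    calc (2*π)⁻¹ * ‖K‖ ≤ (2*π)⁻¹ * ((2*π) * ‖A‖ * (2*π)) := by gcongr
      _ = 2 * π * ‖A‖ := by field_simp
end

section
/- Let H and N be bounded operators on a complex Hilbert space with H self-adjoint. Then for every real t, ‖exp(itH) ∘ N ∘ exp(−itH) − N‖ ≤ |t| · ‖H∘N − N∘H‖ in operator norm. -/
open NormedSpace Complex

lemma hasDerivAt_comp_ofReal' {F : Type*} [NormedAddCommGroup F] [NormedSpace ℂ F]
    {e : ℂ → F} {e' : F} {z : ℝ} (hf : HasDerivAt e e' (z : ℂ)) :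
    HasDerivAt (fun y : ℝ => e y) e' z := by
  have := HasDerivAt.scomp z hf Complex.ofRealCLM.hasDerivAt
  simp at this
  exact this

set_option maxHeartbeats 1000000 in
/-- For bounded operators `H`, `N` with `H` self-adjoint and any real `t`,
`‖exp(itH) N exp(-itH) - N‖ ≤ |t| ‖[H,N]‖`. -/
theorem norm_heisenberg_evolution_sub_le
    {E : Type*} [NormedAddCommGroup E] [InnerProductSpace ℂ E] [CompleteSpace E]
    (H N : E →L[ℂ] E) (hH : IsSelfAdjoint H) (t : ℝ) :
    ‖exp (((t : ℂ) * Complex.I) • H) * N * exp ((-(t : ℂ) * Complex.I) • H) - N‖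
      ≤ |t| * ‖H * N - N * H‖ := by
  by_cases hE : Nontrivial E
  · let +nondep : NormedAlgebra ℚ (E →L[ℂ] E) := .restrictScalars ℚ ℂ (E →L[ℂ] E)
    haveI : Nontrivial (E →L[ℂ] E) := by
      obtain ⟨x, hx⟩ := exists_ne (0 : E)
      exact ⟨⟨0, 1, fun h => hx (by simpa using (congrArg (fun T => T x) h).symm)⟩⟩
    set A : E →L[ℂ] E := Complex.I • H with hA
    have hAskew : A ∈ skewAdjoint (E →L[ℂ] E) :=
      hH.smul_mem_skewAdjoint Complex.conj_I
    -- exp of real multiples of A are unitary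
    have hmem : ∀ s : ℝ, exp ((s : ℂ) • A) ∈ unitary (E →L[ℂ] E) := by
      intro s
      have : (s : ℂ) • A ∈ skewAdjoint (E →L[ℂ] E) := by
        rw [skewAdjoint.mem_iff] at hAskew ⊢
        rw [star_smul, hAskew, Complex.star_def, Complex.conj_ofReal, smul_neg]
      exact exp_mem_unitary_of_mem_skewAdjoint this
    have hnorm : ∀ s : ℝ, ‖exp ((s : ℂ) • A)‖ = 1 := fun s =>
      CStarRing.norm_coe_unitary (⟨_, hmem s⟩ : unitary (E →L[ℂ] E))
    set f : ℝ → (E →L[ℂ] E) := fun s => exp ((s : ℂ) • A) * N * exp ((-s : ℂ) • A) with hf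
    set f' : ℝ → (E →L[ℂ] E) := fun s =>
      exp ((s : ℂ) • A) * (A * N - N * A) * exp ((-s : ℂ) • A) with hf'
    have hderiv : ∀ s : ℝ, HasDerivAt f (f' s) s := by
      intro s
      have h1 : HasDerivAt (fun u : ℝ => exp ((u : ℂ) • A))
          (exp ((s : ℂ) • A) * A) s :=
        hasDerivAt_comp_ofReal' (hasDerivAt_exp_smul_const A ((s : ℂ)))
      have h2c : HasDerivAt (fun u : ℂ => exp ((-u) • A)) (-(exp ((-s : ℂ) • A) * A))
          ((s : ℂ)) := by
        have := hasDerivAt_exp_smul_const (-A) ((s : ℂ))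
        simp only [smul_neg, ← neg_smul] at this
        simpa [mul_neg] using this
      have h2 : HasDerivAt (fun u : ℝ => exp ((-u : ℂ) • A))
          (-(exp ((-s : ℂ) • A) * A)) s := by
        have := hasDerivAt_comp_ofReal' h2c
        simpa using this
      have hd := ((h1.mul_const N).mul h2)
      have hcomm : A * exp ((-s : ℂ) • A) = exp ((-s : ℂ) • A) * A :=
        (Commute.refl A).smul_left _ |>.exp_left |>.symm.eq
      have key : f' s
          = exp ((s : ℂ) • A) * A * N * exp ((-s : ℂ) • A)
            + exp ((s : ℂ) • A) * N * -(exp ((-s : ℂ) • A) * A) := by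
        rw [hf']
        rw [mul_neg, ← hcomm]
        simp only [sub_eq_add_neg, add_mul, neg_mul, mul_add, mul_neg, mul_assoc]
      rw [key]
      exact hd
    have hbound : ∀ s : ℝ, ‖f' s‖ ≤ ‖H * N - N * H‖ := by
      intro s
      have h1 : ‖exp ((s : ℂ) • A) * ((A * N - N * A) * exp ((-s : ℂ) • A))‖
          = ‖(A * N - N * A) * exp ((-s : ℂ) • A)‖ :=
        CStarRing.norm_coe_unitary_mul (⟨_, hmem s⟩ : unitary (E →L[ℂ] E)) _
      have h2 : ‖(A * N - N * A) * exp ((-s : ℂ) • A)‖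
          = ‖A * N - N * A‖ := by
        have := CStarRing.norm_mul_coe_unitary (A * N - N * A)
          (⟨_, by simpa using hmem (-s)⟩ : unitary (E →L[ℂ] E))
        simpa using this
      have hANNA : A * N - N * A = Complex.I • (H * N - N * H) := by
        rw [hA]; simp [smul_sub, smul_mul_assoc, mul_smul_comm]
      refine le_of_eq ?_
      calc ‖f' s‖ = ‖A * N - N * A‖ := by rw [hf']; simp only [mul_assoc]; rw [h1, h2]
        _ = ‖H * N - N * H‖ := by rw [hANNA, norm_smul]; simp
    have key := (convex_univ (𝕜 := ℝ) (E := ℝ)).norm_image_sub_le_of_norm_hasDerivWithin_le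
      (f := f) (f' := f') (fun x _ => (hderiv x).hasDerivWithinAt)
      (fun x _ => hbound x) (Set.mem_univ (0 : ℝ)) (Set.mem_univ t)
    have hf0 : f 0 = N := by simp [hf]
    have hft : f t = exp (((t : ℂ) * Complex.I) • H) * N * exp ((-(t : ℂ) * Complex.I) • H) := by
      rw [hf, hA]; simp only [smul_smul]
    rw [hf0, hft, sub_zero, Real.norm_eq_abs] at key
    linarith [key, mul_comm (‖H * N - N * H‖) |t|]
  · haveI : Subsingleton E := not_nontrivial_iff_subsingleton.mp hE
    haveI : Subsingleton (E →L[ℂ] E) := inferInstance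
    rw [Subsingleton.elim (exp (((t : ℂ) * Complex.I) • H) * N *
      exp ((-(t : ℂ) * Complex.I) • H) - N) 0, norm_zero]
    positivity
end

section
/- Let H, K be bounded self-adjoint operators and O a bounded operator on a complex Hilbert space, and let t ≥ 0. Then ‖exp(itH) ∘ O ∘ exp(−itH) − exp(itK) ∘ O ∘ exp(−itK)‖ ≤ ∫₀^{t} ‖[H − K, exp(iτK) ∘ O ∘ exp(−iτK)]‖ dτ, where [A,B] := A∘B − B∘A and the norms are operator norms. -/
open NormedSpace Complex

set_option maxHeartbeats 1000000
set_option synthInstance.maxHeartbeats 400000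

section Aux
variable {E : Type*} [NormedAddCommGroup E] [InnerProductSpace ℂ E] [CompleteSpace E]

lemma duh_exp_mul (M : E →L[ℂ] E) (s : ℝ) :
    NormedSpace.exp (s • M) * NormedSpace.exp ((-s) • M) = 1 := by
  letI : NormedAlgebra ℚ (E →L[ℂ] E) := .restrictScalars ℚ ℂ _
  rw [← exp_add_of_commute (((Commute.refl M).smul_left s).smul_right (-s))]
  simp [neg_smul]

lemma duh_exp_mul' (M : E →L[ℂ] E) (s : ℝ) :
    NormedSpace.exp ((-s) • M) * NormedSpace.exp (s • M) = 1 := by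
  have := duh_exp_mul M (-s); rwa [neg_neg] at this

lemma duh_star (M : E →L[ℂ] E) (hM : star M = -M) (s : ℝ) :
    star (NormedSpace.exp (s • M)) = NormedSpace.exp ((-s) • M) := by
  rw [star_exp, star_smul, star_trivial, hM, smul_neg, ← neg_smul]

lemma duh_norm_le (M : E →L[ℂ] E) (hM : star M = -M) (s : ℝ) :
    ‖NormedSpace.exp (s • M)‖ ≤ 1 := by
  have h1 : ‖NormedSpace.exp (s • M)‖ * ‖NormedSpace.exp (s • M)‖ = ‖(1 : E →L[ℂ] E)‖ := by
    rw [← CStarRing.norm_star_mul_self, duh_star M hM s, duh_exp_mul' M s]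
  have h2 : ‖(1 : E →L[ℂ] E)‖ ≤ 1 := ContinuousLinearMap.norm_id_le
  nlinarith [norm_nonneg (NormedSpace.exp (s • M))]

lemma duh_conj_le (M : E →L[ℂ] E) (hM : star M = -M) (s s' : ℝ) (X : E →L[ℂ] E) :
    ‖NormedSpace.exp (s • M) * X * NormedSpace.exp (s' • M)‖ ≤ ‖X‖ := by
  calc ‖NormedSpace.exp (s • M) * X * NormedSpace.exp (s' • M)‖
      ≤ ‖NormedSpace.exp (s • M) * X‖ * ‖NormedSpace.exp (s' • M)‖ := norm_mul_le _ _
    _ ≤ (‖NormedSpace.exp (s • M)‖ * ‖X‖) * ‖NormedSpace.exp (s' • M)‖ := by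
        gcongr; exact norm_mul_le _ _
    _ ≤ (1 * ‖X‖) * 1 := by
        gcongr
        · exact duh_norm_le M hM s
        · exact duh_norm_le M hM s'
    _ = ‖X‖ := by ring

lemma duh_exp_cont (M : E →L[ℂ] E) : Continuous (fun s : ℝ => NormedSpace.exp (s • M)) :=
  letI : NormedAlgebra ℚ (E →L[ℂ] E) := .restrictScalars ℚ ℂ _
  exp_continuous.comp (continuous_id.smul continuous_const)

lemma duh_main (H K O : E →L[ℂ] E) (hH : IsSelfAdjoint H) (hK : IsSelfAdjoint K)
    (t : ℝ) (ht : 0 ≤ t) :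
    ‖NormedSpace.exp (t • (Complex.I • H)) * O * NormedSpace.exp ((-t) • (Complex.I • H)) -
        NormedSpace.exp (t • (Complex.I • K)) * O * NormedSpace.exp ((-t) • (Complex.I • K))‖
      ≤ ∫ τ in (0:ℝ)..t,
          ‖(H - K) * (NormedSpace.exp (τ • (Complex.I • K)) * O * NormedSpace.exp ((-τ) • (Complex.I • K))) -
            (NormedSpace.exp (τ • (Complex.I • K)) * O * NormedSpace.exp ((-τ) • (Complex.I • K))) * (H - K)‖ := by
  set A : E →L[ℂ] E := Complex.I • H with hA
  set B : E →L[ℂ] E := Complex.I • K with hB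
  have hAs : star A = -A := by
    simp [hA, star_smul, Complex.star_def, Complex.conj_I, hH.star_eq, neg_smul]
  have hBs : star B = -B := by
    simp [hB, star_smul, Complex.star_def, Complex.conj_I, hK.star_eq, neg_smul]
  set P : ℝ → E →L[ℂ] E := fun τ => NormedSpace.exp (τ • B) * O * NormedSpace.exp ((-τ) • B) with hP
  set W : ℝ → E →L[ℂ] E := fun τ => NormedSpace.exp ((-τ) • A) * P τ * NormedSpace.exp (τ • A) with hWdef
  set C : ℝ → E →L[ℂ] E := fun τ => (H - K) * P τ - P τ * (H - K) with hC
  set D : ℝ → E →L[ℂ] E :=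
    fun τ => NormedSpace.exp ((-τ) • A) * ((-Complex.I) • C τ) * NormedSpace.exp (τ • A) with hD
  -- derivative of P
  have hPd : ∀ τ : ℝ, HasDerivAt P (B * P τ - P τ * B) τ := by
    intro τ
    have h1 : HasDerivAt (fun τ : ℝ => NormedSpace.exp (τ • B)) (B * NormedSpace.exp (τ • B)) τ :=
      hasDerivAt_exp_smul_const' B τ
    have h2 : HasDerivAt (fun τ : ℝ => NormedSpace.exp ((-τ) • B))
        ((-1 : ℝ) • (NormedSpace.exp ((-τ) • B) * B)) τ :=
      (hasDerivAt_exp_smul_const B (-τ)).scomp τ (hasDerivAt_neg τ)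
    have h3 := (h1.mul_const O).mul h2
    convert h3 using 1
    case e'_4 => rfl
    case e'_5 => rfl
    case e'_6 => rfl
    case e'_8 => rfl
    simp only [hP, neg_one_smul]
    noncomm_ring
  -- derivative of W
  have hWd : ∀ τ : ℝ, HasDerivAt W (D τ) τ := by
    intro τ
    have h1 : HasDerivAt (fun τ : ℝ => NormedSpace.exp ((-τ) • A))
        ((-1 : ℝ) • (NormedSpace.exp ((-τ) • A) * A)) τ :=
      (hasDerivAt_exp_smul_const A (-τ)).scomp τ (hasDerivAt_neg τ)
    have h2 : HasDerivAt (fun τ : ℝ => NormedSpace.exp (τ • A)) (A * NormedSpace.exp (τ • A)) τ :=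
      hasDerivAt_exp_smul_const' A τ
    have h3 := ((h1.mul (hPd τ)).mul h2)
    convert h3 using 1
    case e'_4 => rfl
    case e'_5 => rfl
    case e'_6 => rfl
    case e'_8 => rfl
    have inner : (-A) * P τ + (B * P τ - P τ * B) + P τ * A = (-Complex.I) • C τ := by
      simp only [hA, hB, hC, smul_mul_assoc, mul_smul_comm, sub_mul, mul_sub, smul_sub,
        neg_smul, neg_mul]
      abel
    rw [hD]
    beta_reduce
    rw [← inner]
    simp only [neg_one_smul]
    noncomm_ring
  -- continuity of D and of ‖C ·‖
  have hCc : Continuous C := by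
    apply Continuous.sub
    · exact continuous_const.mul (((duh_exp_cont B).mul continuous_const).mul
        ((duh_exp_cont B).comp continuous_neg))
    · exact (((duh_exp_cont B).mul continuous_const).mul
        ((duh_exp_cont B).comp continuous_neg)).mul continuous_const
  have hDc : Continuous D :=
    by have := ((((duh_exp_cont A).comp continuous_neg).mul (hCc.const_smul (-Complex.I))).mul (duh_exp_cont A)); exact this
  -- FTC
  have hftc : ∫ τ in (0:ℝ)..t, D τ = W t - W 0 :=
    intervalIntegral.integral_eq_sub_of_hasDerivAt (fun τ _ => hWd τ)
      (hDc.intervalIntegrable 0 t)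
  have hW0 : W 0 = O := by simp [hWdef, hP]
  -- key conjugation identity
  have hmain : NormedSpace.exp (t • A) * O * NormedSpace.exp ((-t) • A) - P t
      = NormedSpace.exp (t • A) * (O - W t) * NormedSpace.exp ((-t) • A) := by
    have h1 : NormedSpace.exp (t • A) * W t * NormedSpace.exp ((-t) • A)
        = (NormedSpace.exp (t • A) * NormedSpace.exp ((-t) • A)) * P t * (NormedSpace.exp (t • A) * NormedSpace.exp ((-t) • A)) := by
      rw [hWdef]; noncomm_ring
    rw [mul_sub, sub_mul, h1, duh_exp_mul A t]
    simp
  calc ‖NormedSpace.exp (t • A) * O * NormedSpace.exp ((-t) • A) - P t‖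
      = ‖NormedSpace.exp (t • A) * (O - W t) * NormedSpace.exp ((-t) • A)‖ := by rw [hmain]
    _ ≤ ‖O - W t‖ := duh_conj_le A hAs t (-t) _
    _ = ‖W t - W 0‖ := by rw [hW0, norm_sub_rev]
    _ = ‖∫ τ in (0:ℝ)..t, D τ‖ := by rw [hftc]
    _ ≤ ∫ τ in (0:ℝ)..t, ‖D τ‖ := intervalIntegral.norm_integral_le_integral_norm ht
    _ ≤ ∫ τ in (0:ℝ)..t, ‖C τ‖ := by
        apply intervalIntegral.integral_mono_on ht
        · exact (hDc.norm).intervalIntegrable 0 t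
        · exact (hCc.norm).intervalIntegrable 0 t
        · intro τ _
          calc ‖D τ‖ ≤ ‖(-Complex.I) • C τ‖ := duh_conj_le A hAs (-τ) τ _
            _ = ‖C τ‖ := by
                rw [norm_smul]; simp

end Aux

/-- Duhamel-type estimate: for bounded self-adjoint `H`, `K`, a bounded operator `O`
and `t ≥ 0`,
`‖exp(itH) O exp(-itH) - exp(itK) O exp(-itK)‖
  ≤ ∫₀ᵗ ‖[H - K, exp(iτK) O exp(-iτK)]‖ dτ`. -/
theorem norm_evolution_comparison_le_integral
    {E : Type*} [NormedAddCommGroup E] [InnerProductSpace ℂ E] [CompleteSpace E]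
    (H K O : E →L[ℂ] E) (hH : IsSelfAdjoint H) (hK : IsSelfAdjoint K)
    (t : ℝ) (ht : 0 ≤ t) :
    ‖NormedSpace.exp (((t : ℂ) * Complex.I) • H) * O * NormedSpace.exp ((-(t : ℂ) * Complex.I) • H) -
        NormedSpace.exp (((t : ℂ) * Complex.I) • K) * O * NormedSpace.exp ((-(t : ℂ) * Complex.I) • K)‖
      ≤ ∫ τ in (0:ℝ)..t,
          ‖(H - K) * (NormedSpace.exp (((τ : ℂ) * Complex.I) • K) * O *
              NormedSpace.exp ((-(τ : ℂ) * Complex.I) • K)) -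
            (NormedSpace.exp (((τ : ℂ) * Complex.I) • K) * O *
              NormedSpace.exp ((-(τ : ℂ) * Complex.I) • K)) * (H - K)‖ := by
  have eM : ∀ (M : E →L[ℂ] E) (s : ℝ),
      NormedSpace.exp (((s:ℂ) * Complex.I) • M) = NormedSpace.exp (s • (Complex.I • M)) := by
    intro M s
    congr 1
    rw [mul_smul, ← algebraMap_smul ℂ s (Complex.I • M)]
    norm_num
  have eM' : ∀ (M : E →L[ℂ] E) (s : ℝ),
      NormedSpace.exp ((-(s:ℂ) * Complex.I) • M) = NormedSpace.exp ((-s) • (Complex.I • M)) := by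
    intro M s
    rw [show -(s:ℂ) = ((-s : ℝ) : ℂ) by push_cast; ring, eM]
  simp only [eM, eM']
  exact duh_main H K O hH hK t ht
end

section
/- Let Q ∈ [0,1) be a real number and n a natural number. Then ∏_{j=0}^{n−1} (1 − Q·e^{−j})^{−1} ≤ (1 − Q)^{−e/(e−1)}, where e is Euler's number and the right-hand side is the real power (1−Q)^{−e/(e−1)}. -/
open Real

/-!
Bernoulli's inequality `(1 - Q) ^ t ≤ 1 - Q t` for `t ∈ [0, 1]` bounds each factor by
`(1 - Q) ^ (-e^{-j})`; the product is then `(1 - Q)` raised to minus a geometric sum, which is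
at most `∑ e^{-j} = (1 - e⁻¹)⁻¹ = e / (e - 1)`, and `x ↦ (1 - Q) ^ x` is antitone.
-/

lemma one_sub_rpow_le_one_sub_mul {Q t : ℝ} (hQ : Q ≤ 1) (ht₀ : 0 ≤ t) (ht₁ : t ≤ 1) :
    (1 - Q) ^ t ≤ 1 - Q * t := by
  simpa [sub_eq_add_neg, mul_comm] using
    rpow_one_add_le_one_add_mul_self (s := -Q) (by linarith) ht₀ ht₁

lemma prod_inv_one_sub_mul_le_rpow_neg_sum {ι : Type*} (s : Finset ι) {Q : ℝ} (hQ : Q < 1)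
    {t : ι → ℝ} (ht : ∀ i ∈ s, 0 ≤ t i ∧ t i ≤ 1) :
    ∏ i ∈ s, (1 - Q * t i)⁻¹ ≤ (1 - Q) ^ (-∑ i ∈ s, t i) := by
  have hQ' : 0 < 1 - Q := by linarith
  rw [rpow_neg hQ'.le, rpow_sum_of_pos hQ', ← Finset.prod_inv_distrib]
  have hBernoulli : ∀ i ∈ s, (1 - Q) ^ t i ≤ 1 - Q * t i := fun i hi =>
    one_sub_rpow_le_one_sub_mul hQ.le (ht i hi).1 (ht i hi).2
  refine Finset.prod_le_prod (fun i hi => ?_) fun i hi => ?_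
  · exact inv_nonneg.mpr ((rpow_pos_of_pos hQ' _).le.trans (hBernoulli i hi))
  · exact inv_anti₀ (rpow_pos_of_pos hQ' _) (hBernoulli i hi)

lemma sum_range_exp_neg_le (n : ℕ) :
    ∑ j ∈ Finset.range n, exp (-(j : ℝ)) ≤ exp 1 / (exp 1 - 1) := by
  have hgeom := geom_sum_Ico_le_of_lt_one (m := 0) (n := n) (exp_pos (-1)).le
    (exp_lt_one_iff.mpr (by norm_num))
  have he : exp 1 / (exp 1 - 1) = exp (-1) ^ 0 / (1 - exp (-1)) := by
    rw [exp_neg]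
    field_simp
  simpa only [he, ← Finset.range_eq_Ico, ← exp_nat_mul, mul_neg_one] using hgeom

/-- For `0 ≤ Q < 1`,
`∏_{j=0}^{n-1} (1 - Q e^{-j})⁻¹ ≤ (1 - Q)^{-e/(e-1)}` (real power). -/
theorem prod_inv_one_sub_le_rpow
    (Q : ℝ) (hQ0 : 0 ≤ Q) (hQ1 : Q < 1) (n : ℕ) :
    ∏ j ∈ Finset.range n, (1 - Q * Real.exp (-(j : ℝ)))⁻¹
      ≤ (1 - Q) ^ (-(Real.exp 1 / (Real.exp 1 - 1))) := by
  have hexp : ∀ j ∈ Finset.range n, 0 ≤ exp (-(j : ℝ)) ∧ exp (-(j : ℝ)) ≤ 1 :=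
    fun j _ => ⟨(exp_pos _).le, exp_le_one_iff.mpr (by simp)⟩
  calc ∏ j ∈ Finset.range n, (1 - Q * exp (-(j : ℝ)))⁻¹
      ≤ (1 - Q) ^ (-∑ j ∈ Finset.range n, exp (-(j : ℝ))) :=
        prod_inv_one_sub_mul_le_rpow_neg_sum _ hQ1 hexp
    _ ≤ (1 - Q) ^ (-(exp 1 / (exp 1 - 1))) :=
        rpow_le_rpow_of_exponent_ge (by linarith) (by linarith)
          (neg_le_neg (sum_range_exp_neg_le n))
end
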